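/- arXiv:2512.08151 — 2 statements merged into one kernel-verified Lean document; each statement's English description precedes it below -/
import Mathlib

section
/- Assume in addition that Δ is a subgroup of Γ (so Γ is the semidirect product Λ ⋊ Δ, with Δ mapping bijectively to F = Γ/Λ). Let ⟨·,·⟩ be an Ad-invariant inner product on ℝ^m, define v̂(x,s) := ⟨v, α(x,s)⟩ with respect to this inner product, and let θ̲ := (1/#F)·∑_{f∈F} Ad(f). Let μ be a non-degenerate probability measure on Γ with finite second moment. If v lies in the range of θ̲ and v̂ = u + df is a harmonic decomposition of v̂, then u(x,s) = u(x',s) for all x, x' ∈ Δ and all s ∈ Γ (the harmonic part of v̂ does not depend on the first variable). -/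
open scoped BigOperators Classical
open Filter Matrix MeasureTheory

namespace NSVA

noncomputable section

/-- Convolution of two real-valued functions on a group. -/
def conv {G : Type*} [Group G] (μ ν : G → ℝ) : G → ℝ :=
  fun g => ∑' h : G, μ h * ν (h⁻¹ * g)

/-- Convolution powers: `convPow μ 0 = δ_1`, `convPow μ (n+1) = (convPow μ n) * μ`. -/
def convPow {G : Type*} [Group G] (μ : G → ℝ) : ℕ → G → ℝ
  | 0 => fun g => if g = 1 then 1 else 0
  | n + 1 => conv (convPow μ n) μ

/-- A probability measure on a countable set, viewed as a function. -/
def IsProb {G : Type*} (μ : G → ℝ) : Prop := (∀ g, 0 ≤ μ g) ∧ HasSum μ 1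

/-- The support of `μ` generates the group as a semigroup. -/
def Nondeg {G : Type*} [Group G] (μ : G → ℝ) : Prop :=
  ∀ g : G, g ∈ Subsemigroup.closure {x : G | 0 < μ x}

/-- `μ` is aperiodic: `μ_n(1) > 0` for all large enough `n`. -/
def Aperiodic {G : Type*} [Group G] (μ : G → ℝ) : Prop :=
  ∃ N : ℕ, ∀ n : ℕ, N ≤ n → 0 < convPow μ n 1

/-- Total variation distance between two (probability) functions. -/
def tv {Z : Type*} (p q : Z → ℝ) : ℝ := (1 / 2) * ∑' z : Z, |p z - q z|

/-- Word length with respect to a finite set `S₀`. -/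
def wordLength {G : Type*} [Group G] (S₀ : Finset G) (g : G) : ℕ :=
  sInf {n : ℕ | ∃ l : List G, (∀ s ∈ l, s ∈ S₀) ∧ l.length = n ∧ l.prod = g}

/-- Finite second moment with respect to a word metric given by a finite symmetric
generating set. -/
def FinSecondMoment {G : Type*} [Group G] (μ : G → ℝ) : Prop :=
  ∃ S₀ : Finset G, (∀ s ∈ S₀, s⁻¹ ∈ S₀) ∧ Subgroup.closure (S₀ : Set G) = ⊤ ∧
    Summable (fun g : G => (wordLength S₀ g : ℝ) ^ 2 * μ g)

/-- A group is virtually abelian if it has an abelian subgroup of finite index. -/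
def VirtAbelian (G : Type*) [Group G] : Prop :=
  ∃ A : Subgroup G, A.index ≠ 0 ∧ ∀ a b : A, a * b = b * a

/-- The noised measure `π^ρ` on `G × G`. -/
def noised {G : Type*} (μ : G → ℝ) (ρ : ℝ) : G × G → ℝ :=
  fun p => ρ * μ p.1 * μ p.2 + (1 - ρ) * μ p.1 * (if p.1 = p.2 then 1 else 0)

/-- First marginal of a measure on a product. -/
def marg1 {G₁ G₂ : Type*} (ν : G₁ × G₂ → ℝ) : G₁ → ℝ := fun γ₁ => ∑' γ₂ : G₂, ν (γ₁, γ₂)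

/-- Second marginal of a measure on a product. -/
def marg2 {G₁ G₂ : Type*} (ν : G₁ × G₂ → ℝ) : G₂ → ℝ := fun γ₂ => ∑' γ₁ : G₁, ν (γ₁, γ₂)

/-- A system of representatives of the right cosets `Λ\Γ` containing the identity,
together with the representative map `rep`, constant on right cosets. -/
structure RepSystem {Γ : Type*} [Group Γ] (Λ : Subgroup Γ) where
  Δ : Finset Γ
  one_mem : (1 : Γ) ∈ Δ
  rep : Γ → Γ
  rep_mem : ∀ γ : Γ, rep γ ∈ Δ
  rep_spec : ∀ γ : Γ, γ * (rep γ)⁻¹ ∈ Λ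
  rep_idem : ∀ x ∈ Δ, rep x = x
  rep_coset : ∀ γ : Γ, ∀ v ∈ Λ, rep (v * γ) = rep γ

variable {Γ : Type*} [Group Γ] {Λ : Subgroup Γ} {m : ℕ}

/-- The cocycle `α(x,s) = ψ(x·s·(x^s)⁻¹) ∈ ℤ^m`. -/
def cocycle (ψ : Λ ≃* Multiplicative (Fin m → ℤ)) (R : RepSystem Λ) (x s : Γ) : Fin m → ℤ :=
  Multiplicative.toAdd (ψ ⟨x * s * (R.rep (x * s))⁻¹, R.rep_spec (x * s)⟩)

/-- The transfer homomorphism `θ(γ) = ∑_{x∈Δ} α(x,γ)`. -/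
def transfer (ψ : Λ ≃* Multiplicative (Fin m → ℤ)) (R : RepSystem Λ) (γ : Γ) : Fin m → ℤ :=
  ∑ x ∈ R.Δ, cocycle ψ R x γ

/-- `Φ(γ) = ψ(v)` where `γ = v·x`, `v ∈ Λ`, `x ∈ Δ`. -/
def Phi (ψ : Λ ≃* Multiplicative (Fin m → ℤ)) (R : RepSystem Λ) (γ : Γ) : Fin m → ℤ :=
  Multiplicative.toAdd (ψ ⟨γ * (R.rep γ)⁻¹, R.rep_spec γ⟩)

/-- A 1-form on the quotient diagram. -/
def IsOneForm (R : RepSystem Λ) (ω : Γ → Γ → ℝ) : Prop :=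
  ∀ x ∈ R.Δ, ∀ s : Γ, ω (R.rep (x * s)) s⁻¹ = -ω x s

/-- `χ(ω) = ∑_{x∈Δ} ∑_s c(x,s)·ω(x,s)` where `c(x,s) = μ(s)/#F`. -/
def chi (R : RepSystem Λ) (μ : Γ → ℝ) (ω : Γ → Γ → ℝ) : ℝ :=
  ∑ x ∈ R.Δ, ∑' s : Γ, μ s / (Λ.index : ℝ) * ω x s

/-- Square-integrability of a 1-form. -/
def SqInt (R : RepSystem Λ) (μ : Γ → ℝ) (ω : Γ → Γ → ℝ) : Prop :=
  ∀ x ∈ R.Δ, Summable (fun s : Γ => μ s / (Λ.index : ℝ) * ω x s ^ 2)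

/-- Harmonicity of a (square-integrable) 1-form. -/
def Harmonic (R : RepSystem Λ) (μ : Γ → ℝ) (ω : Γ → Γ → ℝ) : Prop :=
  SqInt R μ ω ∧ ∀ x ∈ R.Δ, (∑' s : Γ, μ s * ω x s) = chi R μ ω

/-- The differential `df(x,s) = f(x^s) − f(x)`. -/
def dd (R : RepSystem Λ) (f : Γ → ℝ) : Γ → Γ → ℝ := fun x s => f (R.rep (x * s)) - f x

/-- `(u, f)` is a harmonic decomposition of the 1-form `ω`: `ω = u + df` with `u`
a harmonic 1-form. -/
def IsHarmDecomp (R : RepSystem Λ) (μ : Γ → ℝ) (ω u : Γ → Γ → ℝ) (f : Γ → ℝ) : Prop :=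
  IsOneForm R u ∧ Harmonic R μ u ∧ ∀ x ∈ R.Δ, ∀ s : Γ, ω x s = u x s + dd R f x s

/-- The 1-form `v̂(x,s) = ⟨v, α(x,s)⟩` (standard inner product). -/
def vhat (ψ : Λ ≃* Multiplicative (Fin m → ℤ)) (R : RepSystem Λ) (v : Fin m → ℝ) :
    Γ → Γ → ℝ :=
  fun x s => ∑ i, v i * (cocycle ψ R x s i : ℝ)

/-- The 1-form `v̂(x,s) = B(v, α(x,s))` for a bilinear form `B`. -/
def vhatB (ψ : Λ ≃* Multiplicative (Fin m → ℤ)) (R : RepSystem Λ)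
    (B : (Fin m → ℝ) →ₗ[ℝ] (Fin m → ℝ) →ₗ[ℝ] ℝ) (v : Fin m → ℝ) : Γ → Γ → ℝ :=
  fun x s => B v (fun i => (cocycle ψ R x s i : ℝ))

/-- The drift `ζ = (1/#F)·∑_{x∈Δ}∑_s μ(s)·α(x,s) ∈ ℝ^m`. -/
def drift (ψ : Λ ≃* Multiplicative (Fin m → ℤ)) (R : RepSystem Λ) (μ : Γ → ℝ) : Fin m → ℝ :=
  fun i => (Λ.index : ℝ)⁻¹ * ∑ x ∈ R.Δ, ∑' s : Γ, μ s * (cocycle ψ R x s i : ℝ)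

/-- The covariance pairing `∑_{x,s} c(x,s)·u(x,s)·u'(x,s) − χ(u)·χ(u')`. -/
def cov (R : RepSystem Λ) (μ : Γ → ℝ) (u u' : Γ → Γ → ℝ) : ℝ :=
  (∑ x ∈ R.Δ, ∑' s : Γ, μ s / (Λ.index : ℝ) * (u x s * u' x s)) - chi R μ u * chi R μ u'

/-- The transfer operator `ℒ_v` acting on functions `Δ → ℂ`. -/
def transferOp (ψ : Λ ≃* Multiplicative (Fin m → ℤ)) (R : RepSystem Λ) (μ : Γ → ℝ)
    (v : Fin m → ℝ) (f : Γ → ℂ) : Γ → ℂ :=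
  fun x => ∑' s : Γ, (μ s : ℂ) *
    Complex.exp (2 * Real.pi * Complex.I * ((∑ i, v i * (cocycle ψ R x s i : ℝ)) : ℝ)) *
    f (R.rep (x * s))

/-- The Gaussian density `ξ_A(w)` associated with a (positive-definite) matrix `A`. -/
def gauss {d : ℕ} (A : Matrix (Fin d) (Fin d) ℝ) (w : Fin d → ℝ) : ℝ :=
  (2 * Real.pi) ^ (-(d : ℝ) / 2) * A.det ^ (-(1 : ℝ) / 2) *
    Real.exp (-(w ⬝ᵥ A⁻¹.mulVec w) / 2)

/-- The product representative system for `Λ₁ × Λ₂ ≤ Γ₁ × Γ₂`. -/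
def prodRep {Γ₁ : Type*} [Group Γ₁] {Γ₂ : Type*} [Group Γ₂]
    {Λ₁ : Subgroup Γ₁} {Λ₂ : Subgroup Γ₂}
    (R₁ : RepSystem Λ₁) (R₂ : RepSystem Λ₂) : RepSystem (Λ₁.prod Λ₂) where
  Δ := R₁.Δ ×ˢ R₂.Δ
  one_mem := Finset.mem_product.mpr ⟨R₁.one_mem, R₂.one_mem⟩
  rep := fun p => (R₁.rep p.1, R₂.rep p.2)
  rep_mem := fun p => Finset.mem_product.mpr ⟨R₁.rep_mem p.1, R₂.rep_mem p.2⟩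
  rep_spec := fun p => Subgroup.mem_prod.mpr ⟨R₁.rep_spec p.1, R₂.rep_spec p.2⟩
  rep_idem := fun x hx => by
    rcases Finset.mem_product.mp hx with ⟨h1, h2⟩
    exact Prod.ext_iff.mpr ⟨R₁.rep_idem x.1 h1, R₂.rep_idem x.2 h2⟩
  rep_coset := fun p v hv => by
    rcases Subgroup.mem_prod.mp hv with ⟨h1, h2⟩
    exact Prod.ext_iff.mpr ⟨R₁.rep_coset p.1 v.1 h1, R₂.rep_coset p.2 v.2 h2⟩

/-- The 1-form `𝐯̂(x,s) = ⟨𝐯, α(x,s)⟩` on a product, standard inner product. -/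
def vhat2 {Γ₁ : Type*} [Group Γ₁] {Γ₂ : Type*} [Group Γ₂]
    {Λ₁ : Subgroup Γ₁} {Λ₂ : Subgroup Γ₂} {m₁ m₂ : ℕ}
    (ψ₁ : Λ₁ ≃* Multiplicative (Fin m₁ → ℤ)) (R₁ : RepSystem Λ₁)
    (ψ₂ : Λ₂ ≃* Multiplicative (Fin m₂ → ℤ)) (R₂ : RepSystem Λ₂)
    (v : (Fin m₁ → ℝ) × (Fin m₂ → ℝ)) : (Γ₁ × Γ₂) → (Γ₁ × Γ₂) → ℝ :=
  fun x s => (∑ i, v.1 i * (cocycle ψ₁ R₁ x.1 s.1 i : ℝ)) +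
    ∑ i, v.2 i * (cocycle ψ₂ R₂ x.2 s.2 i : ℝ)

/-- The 1-form `𝐯̂(x,s) = ⟨𝐯, α(x,s)⟩` on a product, orthogonal-sum of the two
bilinear forms `B₁`, `B₂`. -/
def vhatB2 {Γ₁ : Type*} [Group Γ₁] {Γ₂ : Type*} [Group Γ₂]
    {Λ₁ : Subgroup Γ₁} {Λ₂ : Subgroup Γ₂} {m₁ m₂ : ℕ}
    (ψ₁ : Λ₁ ≃* Multiplicative (Fin m₁ → ℤ)) (R₁ : RepSystem Λ₁)
    (B₁ : (Fin m₁ → ℝ) →ₗ[ℝ] (Fin m₁ → ℝ) →ₗ[ℝ] ℝ)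
    (ψ₂ : Λ₂ ≃* Multiplicative (Fin m₂ → ℤ)) (R₂ : RepSystem Λ₂)
    (B₂ : (Fin m₂ → ℝ) →ₗ[ℝ] (Fin m₂ → ℝ) →ₗ[ℝ] ℝ)
    (v : (Fin m₁ → ℝ) × (Fin m₂ → ℝ)) : (Γ₁ × Γ₂) → (Γ₁ × Γ₂) → ℝ :=
  fun x s => B₁ v.1 (fun i => (cocycle ψ₁ R₁ x.1 s.1 i : ℝ)) +
    B₂ v.2 (fun i => (cocycle ψ₂ R₂ x.2 s.2 i : ℝ))

end

/-!
Because `Δ` is a subgroup, `x^s = x·1^s` for `x ∈ Δ`, so `α(x, s) = Ad(x) α(1, s)`. A vector in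
the range of `θ̲` is `Ad`-invariant, hence for an `Ad`-invariant inner product `v̂(x, s) = v̂(1, s)`.
Write `φ(γ) = f(1^γ)`. If `v̂` does not depend on `x` and `u = v̂ - df` is harmonic, the harmonicity
of `u` says that the mean drift `∑_s μ(s)(φ(γ) - φ(γs))` does not depend on `γ`. It is `≥ 0` at a
maximum and `≤ 0` at a minimum of `φ`, hence `0`; then the set of maxima is invariant under right
multiplication by `supp μ`, which generates `Γ`, so `φ` is constant, `df = 0` and `u = v̂`.
-/

theorem linearMap_ext_of_intCast {R ι M : Type*} [Ring R] [Finite ι] [AddCommMonoid M]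
    [Module R M] {f g : (ι → R) →ₗ[R] M}
    (h : ∀ z : ι → ℤ, f (fun i => (z i : R)) = g (fun i => (z i : R))) : f = g :=
  (Pi.basisFun R ι).ext fun i => by
    convert h (Pi.single i 1) using 2 <;> ext k <;> by_cases hk : k = i <;> simp [hk]

theorem apply_sum_eq_of_map_mul {Q R M : Type*} [Group Q] [Fintype Q] [Semiring R]
    [AddCommMonoid M] [Module R M] (ρ : Q → M →ₗ[R] M) (hρ : ∀ a b, ρ (a * b) = ρ a ∘ₗ ρ b)
    (a : Q) (v : M) : ρ a (∑ q, ρ q v) = ∑ q, ρ q v := by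
  rw [map_sum]
  exact Fintype.sum_equiv (Equiv.mulLeft a) _ _ fun q => by simp [hρ]

section Probability

variable {G : Type*} {μ : G → ℝ}

theorem IsProb.summable_mul_of_finite_range (hμ : IsProb μ) {φ : G → ℝ}
    (hφ : (Set.range φ).Finite) : Summable fun g => μ g * φ g := by
  obtain ⟨C, hC⟩ := (hφ.image abs).bddAbove
  refine Summable.of_norm_bounded (hμ.2.summable.mul_right C) fun g => ?_
  rw [Real.norm_eq_abs, abs_mul, abs_of_nonneg (hμ.1 g)]
  exact mul_le_mul_of_nonneg_left (hC ⟨φ g, ⟨g, rfl⟩, rfl⟩) (hμ.1 g)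

theorem IsProb.summable_mul_of_summable_mul_sq (hμ : IsProb μ) {φ : G → ℝ}
    (h : Summable fun g => μ g * φ g ^ 2) : Summable fun g => μ g * φ g := by
  refine Summable.of_norm_bounded ((hμ.2.summable.add h).div_const 2) fun g => ?_
  rw [Real.norm_eq_abs, abs_mul, abs_of_nonneg (hμ.1 g)]
  have := mul_nonneg (hμ.1 g) (sq_nonneg (|φ g| - 1))
  rw [sub_sq, sq_abs] at this
  linarith

theorem Nondeg.forall_of_mul_right [Group G] (hnd : Nondeg μ) {P : G → Prop}
    (hP : ∀ g s, P g → 0 < μ s → P (g * s)) {g₀ : G} (h₀ : P g₀) (g : G) : P g := by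
  have key : ∀ t ∈ Subsemigroup.closure {s | 0 < μ s}, ∀ g, P g → P (g * t) := by
    intro t ht
    induction ht using Subsemigroup.closure_induction with
    | mem s hs => exact fun g hg => hP g s hg hs
    | mul s t _ _ ihs iht => exact fun g hg => by simpa only [mul_assoc] using iht _ (ihs g hg)
  simpa using key _ (hnd (g₀⁻¹ * g)) g₀ h₀

theorem Nondeg.eq_of_tsum_mul_sub_eq [Group G] (hμ : IsProb μ) (hnd : Nondeg μ) {h : G → ℝ}
    (hfin : (Set.range h).Finite) {c : ℝ} (hc : ∀ g, ∑' s, μ s * (h g - h (g * s)) = c)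
    (g g' : G) : h g = h g' := by
  have hsum : ∀ g, Summable fun s => μ s * (h g - h (g * s)) := fun g =>
    hμ.summable_mul_of_finite_range <| (hfin.image (h g - ·)).subset <| by
      rintro _ ⟨s, rfl⟩; exact ⟨_, ⟨g * s, rfl⟩, rfl⟩
  obtain ⟨_, ⟨g₀, rfl⟩, hmax⟩ := Set.exists_max_image _ id hfin (Set.range_nonempty h)
  obtain ⟨_, ⟨g₁, rfl⟩, hmin⟩ := Set.exists_min_image _ id hfin (Set.range_nonempty h)
  have hc_nonneg : 0 ≤ c := hc g₀ ▸ tsum_nonneg fun s =>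
    mul_nonneg (hμ.1 s) (sub_nonneg.2 (hmax _ ⟨_, rfl⟩))
  have hc_nonpos : c ≤ 0 := hc g₁ ▸ tsum_nonpos fun s =>
    mul_nonpos_of_nonneg_of_nonpos (hμ.1 s) (sub_nonpos.2 (hmin _ ⟨_, rfl⟩))
  have hstep : ∀ g s, h g = h g₀ → 0 < μ s → h (g * s) = h g₀ := by
    intro g s hg hs
    by_contra hne
    have hlt : 0 < μ s * (h g - h (g * s)) :=
      mul_pos hs (sub_pos.2 (hg ▸ lt_of_le_of_ne (hmax _ ⟨_, rfl⟩) hne))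
    have := (hsum g).tsum_pos (fun s' => mul_nonneg (hμ.1 s')
      (sub_nonneg.2 (hg ▸ hmax _ ⟨_, rfl⟩))) s hlt
    linarith [hc g]
  rw [hnd.forall_of_mul_right hstep rfl g, hnd.forall_of_mul_right hstep rfl g']

end Probability

namespace RepSystem

variable {Γ : Type*} [Group Γ] {Λ : Subgroup Γ} (R : RepSystem Λ)

theorem rep_rep_mul (g s : Γ) : R.rep (R.rep g * s) = R.rep (g * s) := by
  conv_rhs => rw [show g * s = g * (R.rep g)⁻¹ * (R.rep g * s) by group]
  exact (R.rep_coset _ _ (R.rep_spec g)).symm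

theorem rep_mul_of_mem (hN : Λ.Normal) {x : Γ} (s : Γ) (hxs : x * R.rep s ∈ R.Δ) :
    R.rep (x * s) = x * R.rep s := by
  rw [show x * s = x * (s * (R.rep s)⁻¹) * x⁻¹ * (x * R.rep s) by group,
    R.rep_coset _ _ (hN.conj_mem _ (R.rep_spec s) x), R.rep_idem _ hxs]

end RepSystem

section Conjugation

variable {Γ : Type*} [Group Γ] {Λ : Subgroup Γ} {m : ℕ} (ψ : Λ ≃* Multiplicative (Fin m → ℤ))
  (R : RepSystem Λ)

theorem cocycle_one (s : Γ) :
    cocycle ψ R 1 s = Multiplicative.toAdd (ψ ⟨s * (R.rep s)⁻¹, R.rep_spec s⟩) := by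
  simp only [cocycle, one_mul]

theorem cocycle_eq_of_mul_rep_mem (hN : Λ.Normal) {x s : Γ} (hxs : x * R.rep s ∈ R.Δ) :
    cocycle ψ R x s = Multiplicative.toAdd
      (ψ ⟨x * (s * (R.rep s)⁻¹) * x⁻¹, hN.conj_mem _ (R.rep_spec s) x⟩) := by
  simp only [cocycle, R.rep_mul_of_mem hN s hxs, _root_.mul_inv_rev, mul_assoc]

def IsConjAction (hN : Λ.Normal) (Ad : Γ ⧸ Λ → (Fin m → ℝ) →ₗ[ℝ] (Fin m → ℝ)) : Prop :=
  ∀ (x : Γ) (lam : Λ),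
    Ad (QuotientGroup.mk x) (fun i => (Multiplicative.toAdd (ψ lam) i : ℝ)) =
      fun i => (Multiplicative.toAdd
        (ψ ⟨x * (lam : Γ) * x⁻¹, hN.conj_mem (lam : Γ) lam.2 x⟩) i : ℝ)

variable {ψ} {hN : Λ.Normal} {Ad : Γ ⧸ Λ → (Fin m → ℝ) →ₗ[ℝ] (Fin m → ℝ)}

theorem IsConjAction.map_mul (hAd : IsConjAction ψ hN Ad) (a b : Γ ⧸ Λ) :
    Ad (a * b) = Ad a ∘ₗ Ad b := by
  induction a using QuotientGroup.induction_on with | H x => ?_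
  induction b using QuotientGroup.induction_on with | H y => ?_
  refine linearMap_ext_of_intCast fun z => ?_
  obtain ⟨l, rfl⟩ : ∃ l : Λ, Multiplicative.toAdd (ψ l) = z := ⟨ψ.symm (.ofAdd z), by simp⟩
  rw [← QuotientGroup.mk_mul, hAd, LinearMap.comp_apply, hAd, hAd]
  simp only [_root_.mul_inv_rev, mul_assoc]

theorem IsConjAction.cocycle_eq (hAd : IsConjAction ψ hN Ad) {x s : Γ}
    (hxs : x * R.rep s ∈ R.Δ) :
    (fun i => (cocycle ψ R x s i : ℝ)) =
      Ad (QuotientGroup.mk x) (fun i => (cocycle ψ R 1 s i : ℝ)) := by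
  rw [cocycle_eq_of_mul_rep_mem ψ R hN hxs, cocycle_one, hAd]

theorem IsConjAction.vhatB_eq_vhatB_one (hAd : IsConjAction ψ hN Ad)
    {B : (Fin m → ℝ) →ₗ[ℝ] (Fin m → ℝ) →ₗ[ℝ] ℝ}
    (hB : ∀ (f : Γ ⧸ Λ) (u w : Fin m → ℝ), B (Ad f u) (Ad f w) = B u w) {w : Fin m → ℝ}
    (hw : ∀ f, Ad f w = w) {x s : Γ} (hxs : x * R.rep s ∈ R.Δ) :
    vhatB ψ R B w x s = vhatB ψ R B w 1 s := by
  calc vhatB ψ R B w x s = B (Ad (QuotientGroup.mk x) w)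
        (Ad (QuotientGroup.mk x) (fun i => (cocycle ψ R 1 s i : ℝ))) := by
        rw [hw, ← hAd.cocycle_eq R hxs]; rfl
    _ = vhatB ψ R B w 1 s := hB _ _ _

end Conjugation

theorem IsHarmDecomp.harmonic_eq_of_indep {Γ : Type*} [Group Γ] {Λ : Subgroup Γ}
    (hI : Λ.index ≠ 0) {R : RepSystem Λ} {μ : Γ → ℝ} (hμ : IsProb μ) (hnd : Nondeg μ)
    {ω u : Γ → Γ → ℝ} {f : Γ → ℝ} (hdec : IsHarmDecomp R μ ω u f)
    (hω : ∀ x ∈ R.Δ, ∀ s, ω x s = ω 1 s) : ∀ x ∈ R.Δ, ∀ s, u x s = ω 1 s := by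
  obtain ⟨-, ⟨hsq, hharm⟩, hsplit⟩ := hdec
  set φ : Γ → ℝ := fun g => f (R.rep g) with hφ_def
  have hφ_rep : ∀ g, φ (R.rep g) = φ g := fun g => by
    simp only [hφ_def, R.rep_idem _ (R.rep_mem g)]
  have hu : ∀ x ∈ R.Δ, ∀ s, u x s = ω 1 s - (φ (x * s) - φ x) := fun x hx s => by
    rw [← hω x hx, hsplit x hx s]
    simp only [dd, hφ_def, R.rep_idem x hx]
    ring
  have hsum_u : ∀ x ∈ R.Δ, Summable fun s => μ s * u x s := fun x hx =>
    hμ.summable_mul_of_summable_mul_sq <| (hsq x hx).mul_left (Λ.index : ℝ) |>.congr fun s => by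
      field_simp [Nat.cast_ne_zero.2 hI]
  have hφ_fin : (Set.range φ).Finite := (R.Δ.finite_toSet.image f).subset <|
    Set.range_subset_iff.2 fun g => ⟨_, R.rep_mem g, rfl⟩
  have hsum_φ : ∀ a g, Summable fun s => μ s * (a - φ (g * s)) := fun a g =>
    hμ.summable_mul_of_finite_range <| (hφ_fin.image (a - ·)).subset <| by
      rintro _ ⟨s, rfl⟩; exact ⟨_, ⟨g * s, rfl⟩, rfl⟩
  have hdrift_Δ : ∀ x ∈ R.Δ,
      ∑' s, μ s * (φ x - φ (x * s)) = ∑' s, μ s * (φ 1 - φ (1 * s)) := fun x hx => by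
    have hsum_du : Summable fun s => μ s * (u x s - u 1 s) := by
      simpa only [mul_sub] using (hsum_u x hx).sub (hsum_u 1 R.one_mem)
    have hzero : ∑' s, μ s * (u x s - u 1 s) = 0 := by
      simp only [mul_sub]
      rw [(hsum_u x hx).tsum_sub (hsum_u 1 R.one_mem), hharm x hx, hharm 1 R.one_mem, sub_self]
    calc ∑' s, μ s * (φ x - φ (x * s))
        = ∑' s, (μ s * (u x s - u 1 s) + μ s * (φ 1 - φ (1 * s))) :=
          tsum_congr fun s => by rw [hu x hx, hu 1 R.one_mem]; ring
      _ = ∑' s, μ s * (φ 1 - φ (1 * s)) := by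
          rw [hsum_du.tsum_add (hsum_φ _ 1), hzero, zero_add]
  have hdrift : ∀ g,
      ∑' s, μ s * (φ g - φ (g * s)) = ∑' s, μ s * (φ 1 - φ (1 * s)) := fun g => by
    rw [← hdrift_Δ _ (R.rep_mem g)]
    refine tsum_congr fun s => ?_
    rw [hφ_rep, ← hφ_rep (R.rep g * s), R.rep_rep_mul, hφ_rep]
  intro x hx s
  rw [hu x hx, hnd.eq_of_tsum_mul_sub_eq hμ hφ_fin hdrift (x * s) x, sub_self, sub_zero]

theorem harmonic_part_const_of_semidirect_general
    {Γ : Type*} [Group Γ] {Λ : Subgroup Γ} (hN : Λ.Normal)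
    (hI : Λ.index ≠ 0) {m : ℕ} (ψ : Λ ≃* Multiplicative (Fin m → ℤ))
    (R : RepSystem Λ)
    (hΔ : ∃ H : Subgroup Γ, (H : Set Γ) = (R.Δ : Set Γ))
    (Ad : Γ ⧸ Λ → (Fin m → ℝ) →ₗ[ℝ] (Fin m → ℝ))
    (hAd : ∀ (x : Γ) (lam : Λ),
        Ad (QuotientGroup.mk x) (fun i => (Multiplicative.toAdd (ψ lam) i : ℝ)) =
          fun i => (Multiplicative.toAdd
            (ψ ⟨x * (lam : Γ) * x⁻¹, hN.conj_mem (lam : Γ) lam.2 x⟩) i : ℝ))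
    (B : (Fin m → ℝ) →ₗ[ℝ] (Fin m → ℝ) →ₗ[ℝ] ℝ)
    (hBinv : ∀ (f : Γ ⧸ Λ) (u w : Fin m → ℝ), B (Ad f u) (Ad f w) = B u w)
    (T : (Fin m → ℝ) →ₗ[ℝ] (Fin m → ℝ))
    (hT : ∀ v : Fin m → ℝ, T v = (Λ.index : ℝ)⁻¹ • ∑' f : Γ ⧸ Λ, Ad f v)
    (μ : Γ → ℝ) (hμ : IsProb μ) (hnd : Nondeg μ)
    (v : Fin m → ℝ) (hv : v ∈ LinearMap.range T)
    (u : Γ → Γ → ℝ) (f : Γ → ℝ) (hdec : IsHarmDecomp R μ (vhatB ψ R B v) u f) :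
    ∀ x ∈ R.Δ, ∀ x' ∈ R.Δ, ∀ s : Γ, u x s = u x' s := by
  obtain ⟨H, hH⟩ := hΔ
  have hmem : ∀ g, g ∈ H ↔ g ∈ R.Δ := fun g => by rw [← SetLike.mem_coe, hH, Finset.mem_coe]
  have hmul : ∀ x ∈ R.Δ, ∀ s, x * R.rep s ∈ R.Δ := fun x hx s =>
    (hmem _).1 (H.mul_mem ((hmem x).2 hx) ((hmem _).2 (R.rep_mem s)))
  have hAd' : IsConjAction ψ hN Ad := hAd
  have : Λ.FiniteIndex := ⟨hI⟩
  have : Fintype (Γ ⧸ Λ) := Fintype.ofFinite _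
  obtain ⟨w, rfl⟩ := hv
  have hinv : ∀ q, Ad q (T w) = T w := fun q => by
    rw [hT, tsum_fintype, map_smul, apply_sum_eq_of_map_mul Ad hAd'.map_mul]
  have hu := hdec.harmonic_eq_of_indep hI hμ hnd fun x hx s =>
    hAd'.vhatB_eq_vhatB_one R hBinv hinv (hmul x hx s)
  intro x hx x' hx' s
  rw [hu x hx, hu x' hx']

/-- In a semidirect product (`Δ` a subgroup), for `v` in the range of the
normalized transfer `θ̲`, the harmonic part of `v̂` does not depend on the first variable. -/
theorem harmonic_part_const_of_semidirect
    {Γ : Type*} [Group Γ] [Countable Γ] {Λ : Subgroup Γ} (hN : Λ.Normal)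
    (hI : Λ.index ≠ 0) {m : ℕ} (hm : 1 ≤ m) (ψ : Λ ≃* Multiplicative (Fin m → ℤ))
    (R : RepSystem Λ)
    (hΔ : ∃ H : Subgroup Γ, (H : Set Γ) = (R.Δ : Set Γ))
    (Ad : Γ ⧸ Λ → (Fin m → ℝ) →ₗ[ℝ] (Fin m → ℝ))
    (hAd : ∀ (x : Γ) (lam : Λ),
        Ad (QuotientGroup.mk x) (fun i => (Multiplicative.toAdd (ψ lam) i : ℝ)) =
          fun i => (Multiplicative.toAdd
            (ψ ⟨x * (lam : Γ) * x⁻¹, hN.conj_mem (lam : Γ) lam.2 x⟩) i : ℝ))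
    (B : (Fin m → ℝ) →ₗ[ℝ] (Fin m → ℝ) →ₗ[ℝ] ℝ)
    (hBsymm : ∀ u w : Fin m → ℝ, B u w = B w u)
    (hBpos : ∀ u : Fin m → ℝ, u ≠ 0 → 0 < B u u)
    (hBinv : ∀ (f : Γ ⧸ Λ) (u w : Fin m → ℝ), B (Ad f u) (Ad f w) = B u w)
    (T : (Fin m → ℝ) →ₗ[ℝ] (Fin m → ℝ))
    (hT : ∀ v : Fin m → ℝ, T v = (Λ.index : ℝ)⁻¹ • ∑' f : Γ ⧸ Λ, Ad f v)
    (μ : Γ → ℝ) (hμ : IsProb μ) (hnd : Nondeg μ) (hmom : FinSecondMoment μ)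
    (v : Fin m → ℝ) (hv : v ∈ LinearMap.range T)
    (u : Γ → Γ → ℝ) (f : Γ → ℝ) (hdec : IsHarmDecomp R μ (vhatB ψ R B v) u f) :
    ∀ x ∈ R.Δ, ∀ x' ∈ R.Δ, ∀ s : Γ, u x s = u x' s :=
  harmonic_part_const_of_semidirect_general hN hI ψ R hΔ Ad hAd B hBinv T hT μ hμ hnd v hv u f hdec

end NSVA
end

section
/- Let μ be a non-degenerate aperiodic probability measure on Γ. Then for each δ > 0 there exist constants c_δ, C_δ > 0 such that for all n ∈ ℕ, all x ∈ Δ, and all v = (v_1,…,v_m) ∈ ℝ^m with v_i ∈ [−1/2, 1/2) for every i and max_i |v_i| ≥ δ, one has |(ℒ_v^n 1_x)(id)| ≤ C_δ·exp(−c_δ·n). -/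
open scoped BigOperators Classical
open Filter Matrix MeasureTheory

namespace NSVA

/-! Iterating `ℒ_v` amounts to replacing `μ` by its convolution powers `μ_n`. For `y ∈ Δ` and
`gₖ = ψ⁻¹(eₖ)`, the step `s = y⁻¹ gₖ y` satisfies `y^s = y` and carries the phase `e(v k)`.
Non-degeneracy and aperiodicity give one `N` for which `μ_N` charges `1` and all these finitely
many elements, so in `ℒ_v^N f (y)` the terms `s = 1` and `s = y⁻¹ gₖ y` partly cancel as soon as
`|v k| ≥ δ`. Hence `ℒ_v^N` contracts the sup norm on `Δ` by a factor `L < 1` independent of `v`,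
and `‖ℒ_v^n‖ ≤ L^⌊n/N⌋` decays exponentially. -/

open Real
open scoped FourierTransform

section Convolution

variable {G : Type*} [Group G]

lemma IsProb.hasSum_mul_comp_inv_mul {ν₁ ν₂ : G → ℝ} (h₁ : IsProb ν₁) (h₂ : IsProb ν₂) :
    HasSum (fun p : G × G => ν₁ p.1 * ν₂ (p.1⁻¹ * p.2)) 1 := by
  have hprod : HasSum (fun p : G × G => ν₁ p.1 * ν₂ p.2) 1 := by
    simpa using h₁.2.mul h₂.2 (h₁.2.summable.mul_of_nonneg h₂.2.summable h₁.1 h₂.1)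
  exact (Equiv.hasSum_iff (Equiv.prodShear (Equiv.refl G) fun s => Equiv.mulLeft s)).1
    (by simpa [Function.comp_def] using hprod)

lemma IsProb.conv {ν₁ ν₂ : G → ℝ} (h₁ : IsProb ν₁) (h₂ : IsProb ν₂) : IsProb (conv ν₁ ν₂) := by
  refine ⟨fun g => tsum_nonneg fun h => mul_nonneg (h₁.1 h) (h₂.1 _), ?_⟩
  have hswap := (h₁.hasSum_mul_comp_inv_mul h₂).summable.prod_symm
  exact ((Equiv.prodComm G G).hasSum_iff.2 (h₁.hasSum_mul_comp_inv_mul h₂)).prod_fiberwise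
    fun g => (hswap.prod_factor g).hasSum

lemma IsProb.convPow {μ : G → ℝ} (hμ : IsProb μ) : ∀ n, IsProb (convPow μ n)
  | 0 => ⟨fun g => by simp only [NSVA.convPow]; split_ifs <;> norm_num,
      by simpa [NSVA.convPow] using hasSum_ite_eq (1 : G) (1 : ℝ)⟩
  | n + 1 => (hμ.convPow n).conv hμ

lemma IsProb.summable_conv_summand {ν₁ ν₂ : G → ℝ} (h₁ : IsProb ν₁) (h₂ : IsProb ν₂) (g : G) :
    Summable fun h => ν₁ h * ν₂ (h⁻¹ * g) :=
  (h₁.hasSum_mul_comp_inv_mul h₂).summable.prod_symm.prod_factor g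

lemma mul_le_convPow_add {μ : G → ℝ} (hμ : IsProb μ) (a : ℕ) (g : G) :
    ∀ b (h : G), convPow μ a g * convPow μ b h ≤ convPow μ (a + b) (g * h)
  | 0, h => by
    by_cases hh : h = 1
    · simp [NSVA.convPow, hh]
    · simpa [NSVA.convPow, hh] using (hμ.convPow a).1 (g * h)
  | b + 1, h => by
    have hsmall := ((hμ.convPow b).summable_conv_summand hμ h).mul_left (convPow μ a g)
    have hbig := ((hμ.convPow (a + b)).summable_conv_summand hμ (g * h)).comp_injective
      (mul_right_injective g)
    calc convPow μ a g * convPow μ (b + 1) h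
        = ∑' k, convPow μ a g * (convPow μ b k * μ (k⁻¹ * h)) := tsum_mul_left.symm
      _ ≤ ∑' k, convPow μ (a + b) (g * k) * μ ((g * k)⁻¹ * (g * h)) := by
          refine hsmall.tsum_le_tsum (fun k => ?_) hbig
          rw [← mul_assoc, show (g * k)⁻¹ * (g * h) = k⁻¹ * h by group]
          exact mul_le_mul_of_nonneg_right (mul_le_convPow_add hμ a g b k) (hμ.1 _)
      _ = convPow μ (a + (b + 1)) (g * h) :=
          (Equiv.mulLeft g).tsum_eq fun j => convPow μ (a + b) j * μ (j⁻¹ * (g * h))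

lemma exists_convPow_pos_of_mem_closure {μ : G → ℝ} (hμ : IsProb μ) {g : G}
    (hg : g ∈ Subsemigroup.closure {x | 0 < μ x}) : ∃ n, 0 < convPow μ n g := by
  induction hg using Subsemigroup.closure_induction with
  | mem x hx =>
    refine ⟨1, ?_⟩
    simpa [NSVA.convPow, NSVA.conv, tsum_eq_single (1 : G)] using hx
  | mul x y _ _ hx hy =>
    obtain ⟨a, ha⟩ := hx
    obtain ⟨b, hb⟩ := hy
    exact ⟨a + b, (mul_pos ha hb).trans_le (mul_le_convPow_add hμ a x b y)⟩

lemma eventually_convPow_pos {μ : G → ℝ} (hμ : IsProb μ) (hnd : Nondeg μ) (hap : Aperiodic μ)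
    (g : G) : ∀ᶠ n in atTop, 0 < convPow μ n g := by
  obtain ⟨a, ha⟩ := exists_convPow_pos_of_mem_closure hμ (hnd g)
  obtain ⟨N, hN⟩ := hap
  filter_upwards [eventually_ge_atTop (a + N)] with n hn
  obtain ⟨b, rfl⟩ := Nat.exists_eq_add_of_le (le_trans (Nat.le_add_right a N) hn)
  simpa using (mul_pos ha (hN b (by omega))).trans_le (mul_le_convPow_add hμ a g b 1)

lemma exists_forall_mul_convPow_pos {ι : Type*} [Finite ι] {μ : G → ℝ} (hμ : IsProb μ)
    (hnd : Nondeg μ) (hap : Aperiodic μ) (g : ι → G) :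
    ∃ N, 0 < N ∧ ∀ i, 0 < convPow μ N 1 * convPow μ N (g i) :=
  ((eventually_gt_atTop 0).and ((eventually_convPow_pos hμ hnd hap 1).and
    (eventually_all.2 fun i => eventually_convPow_pos hμ hnd hap (g i)))).exists.imp
    fun _ hN => ⟨hN.1, fun i => mul_pos hN.2.1 (hN.2.2 i)⟩

end Convolution

lemma tsum_conv_smul {E : Type*} [NormedAddCommGroup E] [NormedSpace ℝ E] [CompleteSpace E]
    {G : Type*} [Group G] {ν₁ ν₂ : G → ℝ} (h₁ : IsProb ν₁) (h₂ : IsProb ν₂) {φ : G → E} {B : ℝ}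
    (hφ : ∀ u, ‖φ u‖ ≤ B) :
    ∑' u, conv ν₁ ν₂ u • φ u = ∑' s, ν₁ s • ∑' t, ν₂ t • φ (s * t) := by
  set F : G → G → E := fun s u => (ν₁ s * ν₂ (s⁻¹ * u)) • φ u
  have hF : Summable (Function.uncurry F) := by
    refine .of_norm_bounded ((h₁.hasSum_mul_comp_inv_mul h₂).summable.mul_right B) fun p => ?_
    have hp := mul_nonneg (h₁.1 p.1) (h₂.1 (p.1⁻¹ * p.2))
    exact (norm_smul_of_nonneg hp _).trans_le (mul_le_mul_of_nonneg_left (hφ _) hp)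
  calc ∑' u, conv ν₁ ν₂ u • φ u = ∑' u, ∑' s, F s u :=
        tsum_congr fun u => ((h₁.summable_conv_summand h₂ u).tsum_smul_const (φ u)).symm
    _ = ∑' s, ∑' u, F s u := hF.tsum_comm' hF.prod_factor hF.prod_symm.prod_factor
    _ = ∑' s, ν₁ s • ∑' t, ν₂ t • φ (s * t) := by
        refine tsum_congr fun s => ?_
        rw [← tsum_const_smul'', ← (Equiv.mulLeft s).tsum_eq]
        simp [F, mul_smul]

lemma IsProb.norm_tsum_smul_le_of_ne {ι E : Type*} [NormedAddCommGroup E] [NormedSpace ℝ E]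
    [CompleteSpace E] {ν : ι → ℝ} (hν : IsProb ν) {φ : ι → E} {B : ℝ} (hφ : ∀ i, ‖φ i‖ ≤ B)
    {a b : ι} (hab : a ≠ b) :
    ‖∑' i, ν i • φ i‖ ≤ ‖ν a • φ a + ν b • φ b‖ + (1 - (ν a + ν b)) * B := by
  have hbound (i : ι) : ‖ν i • φ i‖ ≤ ν i * B :=
    (norm_smul_of_nonneg (hν.1 i) _).trans_le (mul_le_mul_of_nonneg_left (hφ i) (hν.1 i))
  have hs : Summable fun i => ν i • φ i := .of_norm_bounded (hν.2.summable.mul_right B) hbound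
  have htail : HasSum (fun i : {i // i ∉ ({a, b} : Finset ι)} => ν i * B)
      ((1 - (ν a + ν b)) * B) :=
    (Finset.hasSum_compl_iff (f := fun i => ν i * B) {a, b}).2 (by
      simpa [Finset.sum_pair hab, ← add_mul] using hν.2.mul_right B)
  rw [← hs.sum_add_tsum_compl (s := {a, b}), Finset.sum_pair hab]
  exact (norm_add_le _ _).trans (add_le_add le_rfl (tsum_of_norm_bounded htail fun i => hbound i))

lemma norm_add_mul_fourierChar_le {a b : ℝ} (ha : 0 ≤ a) (hb : 0 ≤ b) (hab : a + b ≤ 1)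
    (t : ℝ) : ‖(a : ℂ) + b * 𝐞 t‖ ≤ a + b - a * b * (1 - cos (2 * π * t)) := by
  have hsq : ‖(a : ℂ) + b * 𝐞 t‖ ^ 2 = a ^ 2 + b ^ 2 + 2 * a * b * cos (2 * π * t) := by
    rw [Complex.sq_norm, Real.fourierChar_apply, Complex.exp_mul_I, Complex.normSq_apply]
    simp only [Complex.add_re, Complex.add_im, Complex.mul_re, Complex.mul_im,
      Complex.ofReal_re, Complex.ofReal_im, Complex.I_re, Complex.I_im,
      Complex.cos_ofReal_re, Complex.cos_ofReal_im, Complex.sin_ofReal_re,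
      Complex.sin_ofReal_im]
    nlinarith [sin_sq_add_cos_sq (2 * π * t)]
  set c := cos (2 * π * t)
  have hab' : 0 ≤ a * b * (1 - c) := mul_nonneg (mul_nonneg ha hb) (sub_nonneg.2 (cos_le_one _))
  have hgap : 0 ≤ a * b * (1 - c) * (2 * (1 - (a + b)) + a * b * (1 - c)) :=
    mul_nonneg hab' (add_nonneg (by linarith) hab')
  refine le_of_pow_le_pow_left₀ two_ne_zero (by nlinarith [mul_nonneg ha hb]) ?_
  -- the difference of the two squares is `hgap`
  nlinarith [hsq, hgap]

lemma cos_two_pi_mul_le {d t : ℝ} (hd : 0 ≤ d) (hdt : d ≤ |t|) (ht : |t| ≤ 1 / 2) :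
    cos (2 * π * t) ≤ cos (2 * π * d) := by
  rw [← cos_abs, abs_mul, abs_of_pos two_pi_pos]
  exact cos_le_cos_of_nonneg_of_le_pi (by positivity) (by nlinarith [pi_pos]) (by gcongr)

lemma one_sub_cos_two_pi_mul_pos {d : ℝ} (hd0 : 0 < d) (hd1 : d ≤ 1 / 2) :
    0 < 1 - cos (2 * π * d) :=
  sub_pos.2 <| by
    simpa using cos_lt_cos_of_nonneg_of_le_pi le_rfl (by nlinarith [pi_pos])
      (by positivity : 0 < 2 * π * d)

lemma pow_div_le_inv_mul_exp {L : ℝ} (hL0 : 0 < L) (hL1 : L < 1) {N : ℕ} (hN : 0 < N) (n : ℕ) :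
    L ^ (n / N) ≤ L⁻¹ * exp (-(-log L / N) * n) := by
  have hq : (n : ℝ) / N ≤ (n / N : ℕ) + 1 := by
    rw [div_le_iff₀ (by positivity)]
    have := Nat.lt_div_mul_add (a := n) hN
    exact_mod_cast (by rw [add_mul, one_mul]; omega : n ≤ (n / N + 1) * N)
  calc L ^ (n / N) = L⁻¹ * exp (((n / N + 1 : ℕ) : ℝ) * log L) := by
        rw [exp_nat_mul, exp_log hL0, pow_succ', inv_mul_cancel_left₀ hL0.ne']
    _ ≤ L⁻¹ * exp (-(-log L / N) * n) := by
        refine mul_le_mul_of_nonneg_left (exp_le_exp.2 ?_) (inv_nonneg.2 hL0.le)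
        rw [neg_div, neg_neg, div_mul_eq_mul_div, mul_div_assoc, Nat.cast_succ, mul_comm]
        exact mul_le_mul_of_nonpos_left hq (log_neg hL0 hL1).le

section IterateDecay

variable {α E : Type*} [Norm E] {s : Set α} {T : (α → E) → α → E}

lemma norm_iterate_le_of_le
    (hT : ∀ f B, (∀ y ∈ s, ‖f y‖ ≤ B) → ∀ y ∈ s, ‖T f y‖ ≤ B) (n : ℕ) {f : α → E} {B : ℝ}
    (hf : ∀ y ∈ s, ‖f y‖ ≤ B) : ∀ y ∈ s, ‖T^[n] f y‖ ≤ B := by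
  induction n with
  | zero => exact hf
  | succ n ih => rw [Function.iterate_succ_apply']; exact hT _ _ ih

lemma norm_iterate_le_pow_div {N : ℕ} {L : ℝ}
    (hT : ∀ f B, (∀ y ∈ s, ‖f y‖ ≤ B) → ∀ y ∈ s, ‖T f y‖ ≤ B)
    (hTN : ∀ f B, (∀ y ∈ s, ‖f y‖ ≤ B) → ∀ y ∈ s, ‖T^[N] f y‖ ≤ L * B)
    {f : α → E} (hf : ∀ y ∈ s, ‖f y‖ ≤ 1) (n : ℕ) : ∀ y ∈ s, ‖T^[n] f y‖ ≤ L ^ (n / N) := by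
  have hblock : ∀ q, ∀ y ∈ s, ‖T^[N * q] f y‖ ≤ L ^ q := by
    intro q
    induction q with
    | zero => simpa using hf
    | succ q ih =>
      rw [Nat.mul_succ, add_comm, Function.iterate_add_apply, pow_succ']
      exact hTN _ _ ih
  rw [← Nat.mod_add_div n N, Function.iterate_add_apply, Nat.mod_add_div]
  exact norm_iterate_le_of_le hT _ (hblock _)

lemma norm_iterate_le_inv_mul_exp {N : ℕ} (hN : 0 < N) {L : ℝ} (hL0 : 0 < L) (hL1 : L < 1)
    (hT : ∀ f B, (∀ y ∈ s, ‖f y‖ ≤ B) → ∀ y ∈ s, ‖T f y‖ ≤ B)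
    (hTN : ∀ f B, (∀ y ∈ s, ‖f y‖ ≤ B) → ∀ y ∈ s, ‖T^[N] f y‖ ≤ L * B)
    {f : α → E} (hf : ∀ y ∈ s, ‖f y‖ ≤ 1) (n : ℕ) {y : α} (hy : y ∈ s) :
    ‖T^[n] f y‖ ≤ L⁻¹ * exp (-(-log L / N) * n) :=
  (norm_iterate_le_pow_div hT hTN hf n y hy).trans (pow_div_le_inv_mul_exp hL0 hL1 hN n)

end IterateDecay

lemma exists_pos_forall_le_of_finite {ι : Type*} [Finite ι] {a : ι → ℝ} (ha : ∀ i, 0 < a i) :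
    ∃ b, 0 < b ∧ ∀ i, b ≤ a i := by
  cases isEmpty_or_nonempty ι
  · exact ⟨1, one_pos, isEmptyElim⟩
  · obtain ⟨i₀, hi₀⟩ := Finite.exists_min a
    exact ⟨a i₀, ha i₀, hi₀⟩

section TransferOperator

variable {Γ : Type*} [Group Γ] {Λ : Subgroup Γ} {m : ℕ}
  (ψ : Λ ≃* Multiplicative (Fin m → ℤ)) (R : RepSystem Λ)

lemma RepSystem.rep_rep_mul_s11 (a t : Γ) : R.rep (R.rep a * t) = R.rep (a * t) := by
  rw [← R.rep_coset (R.rep a * t) _ (R.rep_spec a)]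
  congr 1
  group

lemma RepSystem.rep_mul_conj {y g : Γ} (hy : y ∈ R.Δ) (hg : g ∈ Λ) :
    R.rep (y * (y⁻¹ * g * y)) = y := by
  rw [show y * (y⁻¹ * g * y) = g * y by group, R.rep_coset y g hg, R.rep_idem y hy]

lemma cocycle_mul (x s t : Γ) :
    cocycle ψ R x (s * t) = cocycle ψ R x s + cocycle ψ R (R.rep (x * s)) t := by
  simp only [cocycle, ← toAdd_mul, ← map_mul]
  congr 3
  simp only [R.rep_rep_mul_s11, ← mul_assoc]
  group

lemma cocycle_one_s11 {x : Γ} (hx : x ∈ R.Δ) : cocycle ψ R x 1 = 0 := by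
  simp [cocycle, R.rep_idem x hx]

lemma cocycle_conj {y : Γ} (hy : y ∈ R.Δ) (g : Λ) :
    cocycle ψ R y (y⁻¹ * g * y) = Multiplicative.toAdd (ψ g) := by
  simp only [cocycle, R.rep_mul_conj hy g.2]
  congr 3
  group

def latticeBasis (k : Fin m) : Λ := ψ.symm (Multiplicative.ofAdd (Pi.single k 1))

variable {ψ R}

lemma vhat_mul (v : Fin m → ℝ) (x s t : Γ) :
    vhat ψ R v x (s * t) = vhat ψ R v x s + vhat ψ R v (R.rep (x * s)) t := by
  simp only [vhat, cocycle_mul, Pi.add_apply, Int.cast_add, mul_add, Finset.sum_add_distrib]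

lemma vhat_one (v : Fin m → ℝ) {x : Γ} (hx : x ∈ R.Δ) : vhat ψ R v x 1 = 0 := by
  simp [vhat, cocycle_one_s11 ψ R hx]

lemma vhat_conj_latticeBasis (v : Fin m → ℝ) {y : Γ} (hy : y ∈ R.Δ) (k : Fin m) :
    vhat ψ R v y (y⁻¹ * latticeBasis ψ k * y) = v k := by
  simp [vhat, latticeBasis, cocycle_conj ψ R hy, Pi.single_apply]

variable (ψ R)

noncomputable def phaseTwist (v : Fin m → ℝ) (f : Γ → ℂ) (x s : Γ) : ℂ :=
  𝐞 (vhat ψ R v x s) * f (R.rep (x * s))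

variable {ψ R}

lemma phaseTwist_mul (v : Fin m → ℝ) (f : Γ → ℂ) (x s t : Γ) :
    phaseTwist ψ R v f x (s * t) =
      𝐞 (vhat ψ R v x s) * phaseTwist ψ R v f (R.rep (x * s)) t := by
  simp only [phaseTwist, vhat_mul, AddChar.map_add_eq_mul, Circle.coe_mul, R.rep_rep_mul_s11,
    mul_assoc]

lemma norm_phaseTwist_le {f : Γ → ℂ} {B : ℝ} (hf : ∀ y ∈ R.Δ, ‖f y‖ ≤ B) (v : Fin m → ℝ)
    (x s : Γ) : ‖phaseTwist ψ R v f x s‖ ≤ B := by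
  rw [phaseTwist, norm_mul, Circle.norm_coe, one_mul]
  exact hf _ (R.rep_mem _)

lemma transferOp_eq_tsum (ν : Γ → ℝ) (v : Fin m → ℝ) (f : Γ → ℂ) (x : Γ) :
    transferOp ψ R ν v f x = ∑' s, ν s • phaseTwist ψ R v f x s := by
  refine tsum_congr fun s => ?_
  rw [phaseTwist, Complex.real_smul, Real.fourierChar_apply, mul_assoc]
  congr 3
  simp only [vhat]
  push_cast
  ring

lemma norm_transferOp_le {ν : Γ → ℝ} (hν : IsProb ν) {f : Γ → ℂ} {B : ℝ}
    (hf : ∀ y ∈ R.Δ, ‖f y‖ ≤ B) (v : Fin m → ℝ) (x : Γ) : ‖transferOp ψ R ν v f x‖ ≤ B := by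
  rw [transferOp_eq_tsum]
  exact tsum_of_norm_bounded (by simpa using hν.2.mul_right B) fun s =>
    (norm_smul_of_nonneg (hν.1 s) _).trans_le
      (mul_le_mul_of_nonneg_left (norm_phaseTwist_le hf v x s) (hν.1 s))

lemma transferOp_conv {ν₁ ν₂ : Γ → ℝ} (h₁ : IsProb ν₁) (h₂ : IsProb ν₂) (v : Fin m → ℝ)
    (f : Γ → ℂ) :
    transferOp ψ R (conv ν₁ ν₂) v f = transferOp ψ R ν₁ v (transferOp ψ R ν₂ v f) := by
  funext x
  obtain ⟨B, hB⟩ := (R.Δ.image fun y => ‖f y‖).exists_le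
  rw [transferOp_eq_tsum, tsum_conv_smul h₁ h₂ (norm_phaseTwist_le (B := B)
    (fun y hy => hB _ (Finset.mem_image_of_mem _ hy)) v x), transferOp_eq_tsum]
  refine tsum_congr fun s => ?_
  rw [phaseTwist, transferOp_eq_tsum, ← tsum_mul_left]
  simp only [mul_smul_comm, phaseTwist_mul]

lemma iterate_transferOp_apply {μ : Γ → ℝ} (hμ : IsProb μ) (v : Fin m → ℝ) (n : ℕ)
    (f : Γ → ℂ) {x : Γ} (hx : x ∈ R.Δ) :
    (transferOp ψ R μ v)^[n] f x = transferOp ψ R (convPow μ n) v f x := by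
  induction n generalizing f with
  | zero =>
    rw [transferOp_eq_tsum, tsum_eq_single 1 fun s hs => by simp [NSVA.convPow, hs]]
    simp [NSVA.convPow, phaseTwist, vhat_one v hx, R.rep_idem x hx]
  | succ n ih =>
    rw [Function.iterate_succ_apply, ih, NSVA.convPow, transferOp_conv (hμ.convPow n) hμ]

lemma norm_transferOp_le_of_rep_mul_eq {ν : Γ → ℝ} (hν : IsProb ν) {f : Γ → ℂ} {B : ℝ}
    (hf : ∀ y ∈ R.Δ, ‖f y‖ ≤ B) (v : Fin m → ℝ) {y h : Γ} (hy : y ∈ R.Δ) (hh : h ≠ 1)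
    (hyh : R.rep (y * h) = y) :
    ‖transferOp ψ R ν v f y‖ ≤ (1 - ν 1 * ν h * (1 - cos (2 * π * vhat ψ R v y h))) * B := by
  have hpair : ν 1 • phaseTwist ψ R v f y 1 + ν h • phaseTwist ψ R v f y h =
      ((ν 1 : ℂ) + ν h * 𝐞 (vhat ψ R v y h)) * f y := by
    simp only [phaseTwist, vhat_one v hy, mul_one, R.rep_idem y hy, hyh, AddChar.map_zero_eq_one,
      Circle.coe_one, Complex.real_smul]
    ring
  have hsum : ν 1 + ν h ≤ 1 := by
    simpa [Finset.sum_pair hh.symm] using sum_le_hasSum {1, h} (fun i _ => hν.1 i) hν.2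
  have hhead := norm_add_mul_fourierChar_le (hν.1 1) (hν.1 h) hsum (vhat ψ R v y h)
  calc ‖transferOp ψ R ν v f y‖
      ≤ ‖((ν 1 : ℂ) + ν h * 𝐞 (vhat ψ R v y h)) * f y‖ + (1 - (ν 1 + ν h)) * B := by
        rw [transferOp_eq_tsum, ← hpair]
        exact hν.norm_tsum_smul_le_of_ne (norm_phaseTwist_le hf v y) hh.symm
    _ ≤ (ν 1 + ν h - ν 1 * ν h * (1 - cos (2 * π * vhat ψ R v y h))) * B
          + (1 - (ν 1 + ν h)) * B := by
        rw [norm_mul]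
        gcongr
        · exact (norm_nonneg _).trans hhead
        · exact hf y hy
    _ = (1 - ν 1 * ν h * (1 - cos (2 * π * vhat ψ R v y h))) * B := by ring

lemma norm_transferOp_le_of_le_abs {ν : Γ → ℝ} (hν : IsProb ν) {b d : ℝ}
    (hb : ∀ y ∈ R.Δ, ∀ k, b ≤ ν 1 * ν (y⁻¹ * latticeBasis ψ k * y)) {v : Fin m → ℝ}
    (hv : ∀ i, |v i| ≤ 1 / 2) {k : Fin m} (hd : 0 ≤ d) (hdk : d ≤ |v k|) {f : Γ → ℂ} {B : ℝ}
    (hf : ∀ y ∈ R.Δ, ‖f y‖ ≤ B) {y : Γ} (hy : y ∈ R.Δ) :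
    ‖transferOp ψ R ν v f y‖ ≤ (1 - b * (1 - cos (2 * π * d))) * B := by
  refine (norm_transferOp_le_of_rep_mul_eq hν hf v hy
    (by simp [latticeBasis, mul_eq_one_iff_eq_inv, mul_eq_left])
    (R.rep_mul_conj hy (latticeBasis ψ k).2)).trans
    (mul_le_mul_of_nonneg_right ?_ ((norm_nonneg _).trans (hf y hy)))
  rw [vhat_conj_latticeBasis v hy k]
  have hcos := cos_two_pi_mul_le hd hdk (hv k)
  exact sub_le_sub_left (mul_le_mul (hb y hy k) (by linarith) (sub_nonneg.2 (cos_le_one _))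
    (mul_nonneg (hν.1 _) (hν.1 _))) 1

end TransferOperator

theorem transfer_op_exponential_decay_general
    {Γ : Type*} [Group Γ] {Λ : Subgroup Γ} {m : ℕ} (ψ : Λ ≃* Multiplicative (Fin m → ℤ))
    (R : RepSystem Λ) (μ : Γ → ℝ) (hμ : IsProb μ) (hnd : Nondeg μ) (hap : Aperiodic μ)
    (δ : ℝ) (hδ : 0 < δ) :
    ∃ c C : ℝ, 0 < c ∧ 0 < C ∧
      ∀ n : ℕ, ∀ x ∈ R.Δ, ∀ v : Fin m → ℝ,
        (∀ i, -(1/2) ≤ v i ∧ v i < 1/2) → (∃ i, δ ≤ |v i|) →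
        ‖(transferOp ψ R μ v)^[n] (fun y => if y = x then 1 else 0) 1‖ ≤
          C * Real.exp (-c * n) := by
  obtain ⟨N, hN, hpos⟩ := exists_forall_mul_convPow_pos hμ hnd hap
    fun p : R.Δ × Fin m => (p.1 : Γ)⁻¹ * latticeBasis ψ p.2 * p.1
  obtain ⟨b, hb0, hb⟩ := exists_pos_forall_le_of_finite hpos
  set d := min δ (1 / 2)
  have hκ := one_sub_cos_two_pi_mul_pos (lt_min hδ one_half_pos) (min_le_right δ (1 / 2))
  -- the `max` keeps `L` positive, so that `log L` makes sense
  set L := max (1 - b * (1 - cos (2 * π * d))) (1 / 2)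
  have hL0 : 0 < L := lt_max_of_lt_right one_half_pos
  have hL1 : L < 1 := max_lt (by nlinarith) (by norm_num)
  refine ⟨-log L / N, L⁻¹, div_pos (neg_pos.2 (log_neg hL0 hL1)) (by positivity), inv_pos.2 hL0,
    fun n x _ v hv ⟨k, hk⟩ => norm_iterate_le_inv_mul_exp hN hL0 hL1
      (fun f B hf y _ => norm_transferOp_le hμ hf v y) (fun f B hf y hy => ?_) (fun y _ => ?_) n
      R.one_mem⟩
  · rw [iterate_transferOp_apply hμ v N f hy]
    refine (norm_transferOp_le_of_le_abs (hμ.convPow N) (fun y hy k => hb (⟨y, hy⟩, k))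
      (fun i => abs_le.2 ⟨(hv i).1, (hv i).2.le⟩) (lt_min hδ one_half_pos).le
      ((min_le_left _ _).trans hk) hf hy).trans ?_
    exact mul_le_mul_of_nonneg_right (le_max_left _ _) ((norm_nonneg _).trans (hf y hy))
  · split_ifs <;> simp

/-- For an aperiodic non-degenerate `μ`, the iterates of the perturbed
transfer operator decay exponentially, uniformly outside any neighborhood of `0` in the
fundamental domain `[−1/2,1/2)^m`. -/
theorem transfer_op_exponential_decay
    {Γ : Type*} [Group Γ] [Countable Γ] {Λ : Subgroup Γ} (hN : Λ.Normal)
    (hI : Λ.index ≠ 0) {m : ℕ} (hm : 1 ≤ m) (ψ : Λ ≃* Multiplicative (Fin m → ℤ))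
    (R : RepSystem Λ) (μ : Γ → ℝ) (hμ : IsProb μ) (hnd : Nondeg μ) (hap : Aperiodic μ)
    (δ : ℝ) (hδ : 0 < δ) :
    ∃ c C : ℝ, 0 < c ∧ 0 < C ∧
      ∀ n : ℕ, ∀ x ∈ R.Δ, ∀ v : Fin m → ℝ,
        (∀ i, -(1/2) ≤ v i ∧ v i < 1/2) → (∃ i, δ ≤ |v i|) →
        ‖(transferOp ψ R μ v)^[n] (fun y => if y = x then 1 else 0) 1‖ ≤
          C * Real.exp (-c * n) :=
  transfer_op_exponential_decay_general ψ R μ hμ hnd hap δ hδ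

end NSVA
end
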